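/- Let W' := {w ∈ W : w⁻¹·α ∈ R⁺ for every α ∈ J₀}. Then for every w ∈ W', the set S_w⁻ is empty if and only if w = 1. -/

import Mathlib

open scoped RealInnerProductSpace

variable {V : Type*} [NormedAddCommGroup V] [InnerProductSpace ℝ V]

/-- The orthogonal reflection `s_α` in the hyperplane perpendicular to `α`,
`s_α x = x - (2⟪x,α⟫/⟪α,α⟫) • α`, as a linear map. -/
noncomputable def reflMap (α : V) : V →ₗ[ℝ] V where
  toFun x := x - (2 * ⟪x, α⟫ / ⟪α, α⟫) • α
  map_add' x y := by
    rw [inner_add_left,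
      show 2 * (⟪x, α⟫ + ⟪y, α⟫) / ⟪α, α⟫
          = 2 * ⟪x, α⟫ / ⟪α, α⟫ + 2 * ⟪y, α⟫ / ⟪α, α⟫ by ring,
      add_smul]
    abel
  map_smul' c x := by
    rw [RingHom.id_apply, real_inner_smul_left, smul_sub,
      show 2 * (c * ⟪x, α⟫) / ⟪α, α⟫ = c * (2 * ⟪x, α⟫ / ⟪α, α⟫) by ring,
      mul_smul]

/-- A finite reduced (crystallographic) root system `R` spanning `V`. -/
structure IsRootSystem (R : Set V) : Prop where
  finite : R.Finite
  zero_not_mem : (0 : V) ∉ R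
  span_top : Submodule.span ℝ R = ⊤
  refl_mem : ∀ α ∈ R, ∀ β ∈ R, reflMap α β ∈ R
  reduced : ∀ α ∈ R, ∀ c : ℝ, c • α ∈ R → c = 1 ∨ c = -1
  crystallographic : ∀ α ∈ R, ∀ β ∈ R, ∃ n : ℤ, 2 * ⟪β, α⟫ / ⟪α, α⟫ = (n : ℝ)

/-- The set `R⁺` of positive roots with respect to a base `Δ`: the roots that are
nonnegative integer combinations of the elements of `Δ`. -/
def posRoots (R Δ : Set V) : Set V :=
  {α ∈ R | α ∈ AddSubmonoid.closure Δ}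

/-- `Δ` is a base (system of simple roots) of the root system `R`: a linearly
independent subset of `R` such that every root lies in exactly one of `R⁺`, `-R⁺`. -/
structure IsBase (R Δ : Set V) : Prop where
  subset : Δ ⊆ R
  indep : LinearIndependent ℝ ((↑) : Δ → V)
  pos_xor_neg : ∀ α ∈ R, Xor' (α ∈ posRoots R Δ) (-α ∈ posRoots R Δ)

/-- The subgroup of `GL(V)` generated by the reflections `s_α` for `α ∈ S`.
For `S = R` this is the Weyl group `W`; for `S = J ⊆ Δ` this is the subgroup `W_J`. -/
def weylGroup (S : Set V) : Subgroup (V ≃ₗ[ℝ] V) :=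
  Subgroup.closure {g | ∃ α ∈ S, ∀ x, g x = reflMap α x}

/-- The set `R_J := R ∩ span_ℝ(J)`. -/
def rootsIn (R J : Set V) : Set V :=
  R ∩ (Submodule.span ℝ J : Submodule ℝ V)

/-- `S_w⁺ := {α ∈ Δ : w·α ∈ R⁺ and w·α ∉ R_{J₀}}`. -/
def Spos (R Δ J₀ : Set V) (w : V ≃ₗ[ℝ] V) : Set V :=
  {α ∈ Δ | w α ∈ posRoots R Δ ∧ w α ∉ rootsIn R J₀}

/-- `S_w⁻ := {α ∈ Δ : w·α ∈ -R⁺ and w·α ∉ R_{J₀}}`. -/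
def Sneg (R Δ J₀ : Set V) (w : V ≃ₗ[ℝ] V) : Set V :=
  {α ∈ Δ | -(w α) ∈ posRoots R Δ ∧ w α ∉ rootsIn R J₀}

/-!
A simple root `α` with `w α ∈ -R⁺` cannot have `w α ∈ span J₀`: otherwise `-w α` is a nonnegative
combination of `J₀`, so `-α = w⁻¹ (-w α)` is a nonnegative combination of the positive roots
`w⁻¹ J₀` and has nonnegative height. Hence `S_w⁻ = ∅` forces `w Δ ⊆ R⁺`, and such a `w` is `1`.
Indeed every positive root is carried to a simple root by simple reflections (lower its height
with a simple `α` such that `⟪β, α⟫ > 0`), so `w = s₁ ⋯ sₙ` is a word in simple reflections; if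
`w αₙ > 0` then `s₁ ⋯ sₙ₋₁ αₙ < 0`, and the deletion argument rewrites `w = (s₁ ⋯ sₙ₋₁) sₙ` as a
word of length `n - 2`.
-/

lemma reflMap_apply (α x : V) : reflMap α x = x - (2 * ⟪x, α⟫ / ⟪α, α⟫) • α := rfl

lemma reflMap_self (α : V) : reflMap α α = -α := by
  rcases eq_or_ne α 0 with rfl | hα
  · simp [reflMap_apply]
  · rw [reflMap_apply, mul_div_assoc, div_self (inner_self_ne_zero.mpr hα), mul_one, two_smul]
    abel

lemma reflMap_neg (α : V) : reflMap (-α) = reflMap α := by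
  ext x
  simp only [reflMap_apply, inner_neg_right, inner_neg_left, neg_neg, neg_div, mul_neg, smul_neg,
    neg_smul]

lemma reflMap_reflMap (α x : V) : reflMap α (reflMap α x) = x := by
  rw [reflMap_apply (x := x), map_sub, map_smul, reflMap_self, reflMap_apply, smul_neg]
  abel

lemma inner_reflMap_reflMap (α x y : V) : ⟪reflMap α x, reflMap α y⟫ = ⟪x, y⟫ := by
  rcases eq_or_ne α 0 with rfl | hα
  · simp [reflMap_apply]
  · have := inner_self_ne_zero (𝕜 := ℝ) |>.mpr hα
    simp only [reflMap_apply, inner_sub_left, inner_sub_right, real_inner_smul_left,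
      real_inner_smul_right, real_inner_comm α y]
    field_simp
    ring

noncomputable def reflEquiv (α : V) : V ≃ₗ[ℝ] V :=
  LinearEquiv.ofInvolutive (reflMap α) (reflMap_reflMap α)

@[simp] lemma reflEquiv_apply (α x : V) : reflEquiv α x = reflMap α x := rfl

lemma reflEquiv_mul_self (α : V) : reflEquiv α * reflEquiv α = 1 :=
  LinearEquiv.ext (reflMap_reflMap α)

lemma reflEquiv_inv (α : V) : (reflEquiv α)⁻¹ = reflEquiv α :=
  inv_eq_of_mul_eq_one_right (reflEquiv_mul_self α)

lemma reflEquiv_neg (α : V) : reflEquiv (-α) = reflEquiv α := by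
  ext x
  simp [reflMap_neg]

lemma reflEquiv_conj {w : V ≃ₗ[ℝ] V} (hw : ∀ x y, ⟪w x, w y⟫ = ⟪x, y⟫) (γ : V) :
    reflEquiv (w γ) = w * reflEquiv γ * w⁻¹ := by
  ext x
  obtain ⟨x, rfl⟩ := w.surjective x
  rw [LinearEquiv.mul_apply, LinearEquiv.mul_apply, LinearEquiv.coe_inv, LinearEquiv.symm_apply_apply,
    reflEquiv_apply, reflEquiv_apply, reflMap_apply, reflMap_apply, hw, hw, map_sub, map_smul]

lemma weylGroup_eq_closure (S : Set V) : weylGroup S = Subgroup.closure (reflEquiv '' S) := by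
  refine congrArg Subgroup.closure (Set.ext fun g => ?_)
  constructor
  · rintro ⟨α, hα, h⟩
    exact ⟨α, hα, (LinearEquiv.ext h).symm⟩
  · rintro ⟨α, hα, rfl⟩
    exact ⟨α, hα, fun _ => rfl⟩

lemma weylGroup_le_iff {S : Set V} {H : Subgroup (V ≃ₗ[ℝ] V)} :
    weylGroup S ≤ H ↔ ∀ α ∈ S, reflEquiv α ∈ H := by
  rw [weylGroup_eq_closure, Subgroup.closure_le, Set.image_subset_iff]
  rfl

lemma reflEquiv_mem_weylGroup {S : Set V} {α : V} (hα : α ∈ S) : reflEquiv α ∈ weylGroup S :=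
  weylGroup_le_iff.mp le_rfl α hα

lemma inner_map_map_of_mem_weylGroup {S : Set V} {w : V ≃ₗ[ℝ] V} (hw : w ∈ weylGroup S)
    (x y : V) : ⟪w x, w y⟫ = ⟪x, y⟫ := by
  rw [weylGroup_eq_closure] at hw
  induction hw using Subgroup.closure_induction'' generalizing x y with
  | mem g hg => obtain ⟨α, -, rfl⟩ := hg; exact inner_reflMap_reflMap α x y
  | inv_mem g hg => obtain ⟨α, -, rfl⟩ := hg; rw [reflEquiv_inv]; exact inner_reflMap_reflMap α x y
  | one => rfl
  | mul g h _ _ ihg ihh => exact (ihg _ _).trans (ihh x y)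

open Pointwise in
lemma IsRootSystem.weylGroup_le_stabilizer {R : Set V} (hR : IsRootSystem R) :
    weylGroup R ≤ MulAction.stabilizer (V ≃ₗ[ℝ] V) R := by
  refine weylGroup_le_iff.mpr fun α hα => MulAction.mem_stabilizer_set.mpr fun β => ?_
  rw [LinearEquiv.smul_def, reflEquiv_apply]
  exact ⟨fun h => reflMap_reflMap α β ▸ hR.refl_mem α hα _ h, hR.refl_mem α hα β⟩

lemma IsRootSystem.map_mem {R : Set V} (hR : IsRootSystem R) {w : V ≃ₗ[ℝ] V}
    (hw : w ∈ weylGroup R) {β : V} (hβ : β ∈ R) : w β ∈ R :=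
  (MulAction.mem_stabilizer_set.mp (hR.weylGroup_le_stabilizer hw) β).mpr hβ

lemma exists_list_prod_eq_of_mem_weylGroup {S : Set V} {w : V ≃ₗ[ℝ] V} (hw : w ∈ weylGroup S) :
    ∃ l : List (V ≃ₗ[ℝ] V), (∀ g ∈ l, g ∈ reflEquiv '' S) ∧ l.prod = w := by
  have hinv : (reflEquiv '' S)⁻¹ = reflEquiv '' S := by
    rw [← Set.image_inv_eq_inv, Set.image_image]
    simp_rw [reflEquiv_inv]
  rw [weylGroup_eq_closure, ← Subgroup.mem_toSubmonoid, Subgroup.closure_toSubmonoid, hinv,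
    Set.union_self] at hw
  exact Submonoid.exists_list_of_mem_closure hw

lemma list_prod_mem_weylGroup {S : Set V} {l : List (V ≃ₗ[ℝ] V)}
    (hl : ∀ g ∈ l, g ∈ reflEquiv '' S) : l.prod ∈ weylGroup S :=
  Subgroup.list_prod_mem _ fun g hg => by
    obtain ⟨α, hα, rfl⟩ := hl g hg
    exact reflEquiv_mem_weylGroup hα

lemma apply_nonneg_of_mem_closure {M N F : Type*} [AddMonoid M] [AddCommMonoid N] [PartialOrder N]
    [IsOrderedAddMonoid N] [FunLike F M N] [AddMonoidHomClass F M N] (f : F) {s : Set M}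
    (hf : ∀ x ∈ s, 0 ≤ f x) {x : M} (hx : x ∈ AddSubmonoid.closure s) : 0 ≤ f x := by
  induction hx using AddSubmonoid.closure_induction with
  | mem x hx => exact hf x hx
  | zero => rw [map_zero]
  | add x y _ _ hx hy => rw [map_add]; exact add_nonneg hx hy

lemma Module.Basis.eq_repr_smul_of_forall_ne {ι K M : Type*} [Semiring K] [AddCommMonoid M]
    [Module K M] (b : Module.Basis ι K M) {x : M} {i : ι} (h : ∀ j ≠ i, b.repr x j = 0) :
    x = b.repr x i • b i := by
  classical
  apply b.repr.injective
  ext j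
  rcases eq_or_ne j i with rfl | hj
  · simp
  · simp [h j hj, Finsupp.single_eq_of_ne hj]

lemma IsRootSystem.ne_zero {R : Set V} (hR : IsRootSystem R) {β : V} (hβ : β ∈ R) : β ≠ 0 :=
  fun h => hR.zero_not_mem (h ▸ hβ)

lemma IsRootSystem.exists_inner_pos {R Δ : Set V} (hR : IsRootSystem R) {β : V}
    (hβ : β ∈ posRoots R Δ) : ∃ α ∈ Δ, 0 < ⟪β, α⟫ := by
  by_contra! h
  have := apply_nonneg_of_mem_closure (-innerₛₗ ℝ β) (fun α hα => by simpa using h α hα) hβ.2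
  exact hR.ne_zero hβ.1 (real_inner_self_nonpos.mp (by simpa using this))

namespace IsBase

variable {R Δ : Set V} (hR : IsRootSystem R) (hΔ : IsBase R Δ)
include hΔ

lemma mem_posRoots {α : V} (hα : α ∈ Δ) : α ∈ posRoots R Δ :=
  ⟨hΔ.subset hα, AddSubmonoid.subset_closure hα⟩

lemma neg_notMem_posRoots {β : V} (hβ : β ∈ posRoots R Δ) : -β ∉ posRoots R Δ :=
  fun h => (hΔ.pos_xor_neg β hβ.1).elim (fun h' => h'.2 h) (fun h' => h'.2 hβ)

lemma mem_or_neg_mem_posRoots {β : V} (hβ : β ∈ R) : β ∈ posRoots R Δ ∨ -β ∈ posRoots R Δ :=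
  Xor.or (hΔ.pos_xor_neg β hβ)

include hR

lemma span_eq_top : Submodule.span ℝ Δ = ⊤ := by
  rw [eq_top_iff, ← hR.span_top, Submodule.span_le]
  intro β hβ
  rcases hΔ.mem_or_neg_mem_posRoots hβ with h | h
  · exact Submodule.closure_subset_span h.2
  · simpa using neg_mem (Submodule.closure_subset_span (R := ℝ) h.2)

noncomputable def basis : Module.Basis Δ ℝ V :=
  .mk hΔ.indep (by rw [Subtype.range_coe, hΔ.span_eq_top hR])

@[simp] lemma basis_apply (i : Δ) : hΔ.basis hR i = i := Module.Basis.mk_apply _ _ _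

noncomputable def height : V →ₗ[ℝ] ℝ := (hΔ.basis hR).sumCoords

lemma height_apply_of_mem {α : V} (hα : α ∈ Δ) : hΔ.height hR α = 1 := by
  have := (hΔ.basis hR).sumCoords_self_apply ⟨α, hα⟩
  rwa [hΔ.basis_apply] at this

lemma exists_height_eq_natCast {x : V} (hx : x ∈ AddSubmonoid.closure Δ) :
    ∃ n : ℕ, hΔ.height hR x = n := by
  induction hx using AddSubmonoid.closure_induction with
  | mem x hx => exact ⟨1, by rw [hΔ.height_apply_of_mem hR hx, Nat.cast_one]⟩
  | zero => exact ⟨0, by rw [map_zero, Nat.cast_zero]⟩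
  | add x y _ _ hx hy =>
    obtain ⟨m, hm⟩ := hx
    obtain ⟨n, hn⟩ := hy
    exact ⟨m + n, by rw [map_add, hm, hn, Nat.cast_add]⟩

lemma basis_repr_nonneg {x : V} (hx : x ∈ AddSubmonoid.closure Δ) (i : Δ) :
    0 ≤ (hΔ.basis hR).repr x i := by
  refine apply_nonneg_of_mem_closure ((hΔ.basis hR).coord i) (fun α hα => ?_) hx
  have := (hΔ.basis hR).repr_self ⟨α, hα⟩
  rw [hΔ.basis_apply] at this
  rw [Module.Basis.coord_apply, this]
  exact Finsupp.single_nonneg.mpr zero_le_one i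

lemma eq_of_smul_mem_posRoots {α : V} (hα : α ∈ Δ) {c : ℝ} (h : c • α ∈ posRoots R Δ) :
    c • α = α := by
  rcases hR.reduced α (hΔ.subset hα) c h.1 with rfl | rfl
  · exact one_smul ℝ α
  · exact absurd (by simpa using h) (hΔ.neg_notMem_posRoots (hΔ.mem_posRoots hα))

lemma eq_of_reflMap_notMem_posRoots {α β : V} (hα : α ∈ Δ) (hβ : β ∈ posRoots R Δ)
    (h : reflMap α β ∉ posRoots R Δ) : β = α := by
  have hneg : -reflMap α β ∈ posRoots R Δ :=
    (hΔ.mem_or_neg_mem_posRoots (hR.refl_mem α (hΔ.subset hα) β hβ.1)).resolve_left h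
  have hcoord : ∀ i ≠ ⟨α, hα⟩, (hΔ.basis hR).repr β i = 0 := by
    intro i hi
    have hαi : (hΔ.basis hR).repr α i = 0 := by
      have := (hΔ.basis hR).repr_self ⟨α, hα⟩
      rw [hΔ.basis_apply] at this
      rw [this, Finsupp.single_eq_of_ne hi]
    have := hΔ.basis_repr_nonneg hR hneg.2 i
    rw [reflMap_apply, neg_sub, map_sub, map_smul, Finsupp.sub_apply, Finsupp.smul_apply, hαi,
      smul_zero, zero_sub] at this
    linarith [hΔ.basis_repr_nonneg hR hβ.2 i]
  have hβα := (hΔ.basis hR).eq_repr_smul_of_forall_ne hcoord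
  rw [hΔ.basis_apply] at hβα
  rw [hβα] at hβ ⊢
  exact hΔ.eq_of_smul_mem_posRoots hR hα hβ

lemma exists_reflMap_mem_posRoots_height_lt {β : V} (hβ : β ∈ posRoots R Δ) (hβΔ : β ∉ Δ) :
    ∃ α ∈ Δ, reflMap α β ∈ posRoots R Δ ∧ hΔ.height hR (reflMap α β) < hΔ.height hR β := by
  obtain ⟨α, hα, hβα⟩ := hR.exists_inner_pos hβ
  refine ⟨α, hα, of_not_not fun h => hβΔ (hΔ.eq_of_reflMap_notMem_posRoots hR hα hβ h ▸ hα), ?_⟩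
  have hαα : 0 < ⟪α, α⟫ := real_inner_self_pos.mpr (hR.ne_zero (hΔ.subset hα))
  have : 0 < 2 * ⟪β, α⟫ / ⟪α, α⟫ := by positivity
  rw [reflMap_apply, map_sub, map_smul, hΔ.height_apply_of_mem hR hα, smul_eq_mul, mul_one]
  linarith

lemma reflEquiv_mem_weylGroup_of_mem_posRoots {β : V} (hβ : β ∈ posRoots R Δ) :
    reflEquiv β ∈ weylGroup Δ := by
  obtain ⟨n, hn⟩ := hΔ.exists_height_eq_natCast hR hβ.2
  induction n using Nat.strong_induction_on generalizing β with
  | _ n ih =>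
  by_cases hβΔ : β ∈ Δ
  · exact reflEquiv_mem_weylGroup hβΔ
  obtain ⟨α, hα, hpos, hlt⟩ := hΔ.exists_reflMap_mem_posRoots_height_lt hR hβ hβΔ
  obtain ⟨m, hm⟩ := hΔ.exists_height_eq_natCast hR hpos.2
  rw [hm, hn, Nat.cast_lt] at hlt
  have hconj : reflEquiv β = reflEquiv α * reflEquiv (reflMap α β) * reflEquiv α := by
    conv_lhs => rw [← reflMap_reflMap α β]
    rw [← reflEquiv_apply, reflEquiv_conj (inner_reflMap_reflMap α), reflEquiv_inv]
  rw [hconj]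
  exact mul_mem (mul_mem (reflEquiv_mem_weylGroup hα) (ih m hlt hpos hm))
    (reflEquiv_mem_weylGroup hα)

lemma weylGroup_le : weylGroup R ≤ weylGroup Δ := by
  refine weylGroup_le_iff.mpr fun β hβ => ?_
  rcases hΔ.mem_or_neg_mem_posRoots hβ with h | h
  · exact hΔ.reflEquiv_mem_weylGroup_of_mem_posRoots hR h
  · simpa [reflEquiv_neg] using hΔ.reflEquiv_mem_weylGroup_of_mem_posRoots hR h

lemma exists_list_prod_eq_mul_reflEquiv {l : List (V ≃ₗ[ℝ] V)} (hl : ∀ g ∈ l, g ∈ reflEquiv '' Δ)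
    {t : V} (ht : t ∈ Δ) (hlt : l.prod t ∉ posRoots R Δ) :
    ∃ l' : List (V ≃ₗ[ℝ] V), (∀ g ∈ l', g ∈ reflEquiv '' Δ) ∧ l'.length + 1 = l.length ∧
      l'.prod = l.prod * reflEquiv t := by
  induction l with
  | nil => exact absurd (hΔ.mem_posRoots ht) hlt
  | cons g l ih =>
    obtain ⟨a, ha, rfl⟩ := hl g List.mem_cons_self
    have hl' : ∀ g ∈ l, g ∈ reflEquiv '' Δ := fun g hg => hl g (List.mem_cons_of_mem _ hg)
    rw [List.prod_cons] at hlt ⊢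
    by_cases hpos : l.prod t ∈ posRoots R Δ
    · have hta : l.prod t = a := hΔ.eq_of_reflMap_notMem_posRoots hR ha hpos hlt
      have hcomm : reflEquiv a * l.prod = l.prod * reflEquiv t := by
        rw [← hta, reflEquiv_conj (inner_map_map_of_mem_weylGroup (list_prod_mem_weylGroup hl')),
          inv_mul_cancel_right]
      exact ⟨l, hl', rfl, by rw [hcomm, mul_assoc, reflEquiv_mul_self, mul_one]⟩
    · obtain ⟨l', hl'', hlen, hprod⟩ := ih hl' hpos
      refine ⟨reflEquiv a :: l', ?_, by simp [hlen], by rw [List.prod_cons, hprod, mul_assoc]⟩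
      exact List.forall_mem_cons.mpr ⟨⟨a, ha, rfl⟩, hl''⟩

lemma list_prod_eq_one_of_forall_mem_posRoots {l : List (V ≃ₗ[ℝ] V)}
    (hl : ∀ g ∈ l, g ∈ reflEquiv '' Δ) (hpos : ∀ α ∈ Δ, l.prod α ∈ posRoots R Δ) : l.prod = 1 := by
  induction h : l.length using Nat.strong_induction_on generalizing l with
  | _ n ih =>
  rcases l.eq_nil_or_concat' with rfl | ⟨L, g, rfl⟩
  · rfl
  obtain ⟨t, ht, rfl⟩ := hl g (by simp)
  have hL : ∀ g ∈ L, g ∈ reflEquiv '' Δ := fun g hg => hl g (by simp [hg])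
  have hprod : (L ++ [reflEquiv t]).prod = L.prod * reflEquiv t := by simp
  have hLt : L.prod t ∉ posRoots R Δ := by
    have := hpos t ht
    rw [hprod, LinearEquiv.mul_apply, reflEquiv_apply, reflMap_self, map_neg] at this
    exact fun h => hΔ.neg_notMem_posRoots h this
  obtain ⟨l', hl', hlen, hl'prod⟩ := hΔ.exists_list_prod_eq_mul_reflEquiv hR hL ht hLt
  rw [hprod, ← hl'prod] at hpos ⊢
  simp only [List.length_append, List.length_singleton] at h
  exact ih l'.length (by omega) hl' hpos rfl

lemma eq_one_of_forall_mem_posRoots {w : V ≃ₗ[ℝ] V} (hw : w ∈ weylGroup Δ)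
    (hpos : ∀ α ∈ Δ, w α ∈ posRoots R Δ) : w = 1 := by
  obtain ⟨l, hl, rfl⟩ := exists_list_prod_eq_of_mem_weylGroup hw
  exact hΔ.list_prod_eq_one_of_forall_mem_posRoots hR hl hpos

lemma apply_nonneg_of_mem_closure_of_mem_span {J : Set V} (hJ : J ⊆ Δ) (φ : V →ₗ[ℝ] ℝ)
    (hφ : ∀ γ ∈ J, 0 ≤ φ γ) {y : V} (hy : y ∈ AddSubmonoid.closure Δ)
    (hyJ : y ∈ Submodule.span ℝ J) : 0 ≤ φ y := by
  classical
  let ψ := (hΔ.basis hR).constr ℝ fun i => if (i : V) ∈ J then φ i else 0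
  have hψ (i : Δ) : ψ i = if (i : V) ∈ J then φ i else 0 := by
    have := (hΔ.basis hR).constr_basis ℝ (fun i => if (i : V) ∈ J then φ i else 0) i
    rwa [hΔ.basis_apply] at this
  have hφψ : Set.EqOn φ ψ J := fun γ hγ => by rw [hψ ⟨γ, hJ hγ⟩, if_pos hγ]
  rw [LinearMap.eqOn_span hφψ hyJ]
  refine apply_nonneg_of_mem_closure ψ (fun δ hδ => ?_) hy
  rw [hψ ⟨δ, hδ⟩]
  split_ifs with h
  exacts [hφ δ h, le_rfl]

lemma apply_notMem_span_of_neg_mem_posRoots {J : Set V} (hJ : J ⊆ Δ) {w : V ≃ₗ[ℝ] V}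
    (hw : ∀ γ ∈ J, w⁻¹ γ ∈ posRoots R Δ) {α : V} (hα : α ∈ Δ) (hneg : -w α ∈ posRoots R Δ) :
    w α ∉ Submodule.span ℝ J := by
  intro hαJ
  -- `height ∘ w⁻¹` is nonnegative on `J`, but equals `-1` at `-w α`
  have := hΔ.apply_nonneg_of_mem_closure_of_mem_span hR hJ
    (hΔ.height hR ∘ₗ (w⁻¹ : V ≃ₗ[ℝ] V).toLinearMap)
    (fun γ hγ => apply_nonneg_of_mem_closure (hΔ.height hR)
      (fun δ hδ => (hΔ.height_apply_of_mem hR hδ).symm ▸ zero_le_one) (hw γ hγ).2)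
    hneg.2 (neg_mem hαJ)
  rw [LinearMap.comp_apply, LinearEquiv.coe_coe, LinearEquiv.coe_inv, map_neg,
    LinearEquiv.symm_apply_apply, map_neg, hΔ.height_apply_of_mem hR hα] at this
  linarith

end IsBase

theorem Sneg_empty_iff_eq_one_general
    (R Δ J₀ : Set V)
    (hR : IsRootSystem R) (hΔ : IsBase R Δ) (hJ₀ : J₀ ⊆ Δ)
    (w : V ≃ₗ[ℝ] V) (hw : w ∈ weylGroup R)
    (hw' : ∀ α ∈ J₀, w⁻¹ α ∈ posRoots R Δ) :
    Sneg R Δ J₀ w = ∅ ↔ w = 1 := by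
  refine ⟨fun hS => hΔ.eq_one_of_forall_mem_posRoots hR (hΔ.weylGroup_le hR hw) fun α hα => ?_, ?_⟩
  · by_contra hpos
    have hneg : -w α ∈ posRoots R Δ :=
      (hΔ.mem_or_neg_mem_posRoots (hR.map_mem hw (hΔ.subset hα))).resolve_left hpos
    have hJ : w α ∈ rootsIn R J₀ := of_not_not fun h => hS.subset ⟨hα, hneg, h⟩
    exact hΔ.apply_notMem_span_of_neg_mem_posRoots hR hJ₀ hw' hα hneg hJ.2
  · rintro rfl
    exact Set.eq_empty_of_forall_notMem fun α ⟨hα, hneg, _⟩ =>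
      hΔ.neg_notMem_posRoots (hΔ.mem_posRoots hα) hneg

/-- §9.2, Corollary on the partition of `Δ`, part (1):
for every `w` in `W' = {w ∈ W : w⁻¹·J₀ ⊆ R⁺}` (the set of minimal-length coset
representatives of `W_{J₀}\W`), the set `S_w⁻` is empty if and only if `w = 1`. -/
theorem Sneg_empty_iff_eq_one
    [FiniteDimensional ℝ V] (R Δ J₀ : Set V)
    (hR : IsRootSystem R) (hΔ : IsBase R Δ) (hJ₀ : J₀ ⊆ Δ)
    (w : V ≃ₗ[ℝ] V) (hw : w ∈ weylGroup R)
    (hw' : ∀ α ∈ J₀, w⁻¹ α ∈ posRoots R Δ) :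
    Sneg R Δ J₀ w = ∅ ↔ w = 1 :=
  Sneg_empty_iff_eq_one_general R Δ J₀ hR hΔ hJ₀ w hw hw'
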